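/- Bypassing a reversible left option preserves equivalence: suppose G = ⟨{H} ∪ L | R⟩ is a composite game with left option H, and H has a composite right option K with K ≤ G. Then G is equivalent to G' = ⟨K^L ∪ L | R⟩, where K^L is the set of left options of K and L is the set of left options of G other than H. -/
import Mathlib


inductive Game (A : Type) : Type 1 where
  | atom : A → Game A
  | comp : (ι κ : Type) → (ι → Game A) → (κ → Game A) → Nonempty ι → Nonempty κ → Game A

namespace Game

variable {A : Type}

/-- `G.IsAtom` holds iff `G` is an atomic game. -/
def IsAtom : Game A → Prop
  | atom _ => True
  | comp _ _ _ _ _ _ => False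

/-- `G.IsLeftOption x`: `x` is a left option of `G`. -/
def IsLeftOption : Game A → Game A → Prop
  | atom _, _ => False
  | comp _ _ L _ _ _, x => ∃ i, L i = x

/-- `G.IsRightOption y`: `y` is a right option of `G`. -/
def IsRightOption : Game A → Game A → Prop
  | atom _, _ => False
  | comp _ _ _ R _ _, x => ∃ j, R j = x

section Ord

variable [PartialOrder A]

mutual
  /-- The order relation `G ≤ H` on games over a poset. -/
  inductive Le : Game A → Game A → Prop
    | mk : ∀ {G H : Game A},
        (∀ x, G.IsLeftOption x → Tri x H) →
        (∀ y, H.IsRightOption y → Tri G y) →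
        ((G.IsAtom ∨ H.IsAtom) → Tri G H) →
        Le G H
  /-- The relation `G ◁ H` on games over a poset. -/
  inductive Tri : Game A → Game A → Prop
    | ofRight : ∀ {G H y : Game A}, G.IsRightOption y → Le y H → Tri G H
    | ofLeft : ∀ {G H x : Game A}, H.IsLeftOption x → Le G x → Tri G H
    | ofAtom : ∀ {a b : A}, a ≤ b → Tri (Game.atom a) (Game.atom b)
end

/-- Equivalence of games: `G ≤ H` and `H ≤ G`. -/
def Equiv (G H : Game A) : Prop := Le G H ∧ Le H G

/-- A game is monotone if all of its options are good, and recursively all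
options are monotone. -/
inductive Monotone : Game A → Prop
  | mk : ∀ {G : Game A},
      (∀ x, G.IsLeftOption x → Le G x) →
      (∀ y, G.IsRightOption y → Le y G) →
      (∀ x, G.IsLeftOption x → Monotone x) →
      (∀ y, G.IsRightOption y → Monotone y) →
      Monotone G

/-- A game is passable if `G ◁ G` and recursively all options are passable. -/
inductive Passable : Game A → Prop
  | mk : ∀ {G : Game A}, Tri G G →
      (∀ x, G.IsLeftOption x → Passable x) →
      (∀ y, G.IsRightOption y → Passable y) →
      Passable G

end Ord

end Game

/-- Reflexivity of `Le`. -/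
theorem Game.le_refl' {A : Type} [PartialOrder A] (G : Game A) : Game.Le G G := by
  induction G with
  | atom a => exact .mk (fun _ h => h.elim) (fun _ h => h.elim) (fun _ => .ofAtom le_rfl)
  | comp ι κ L R hι hκ ihL ihR =>
    refine .mk (fun x hx => ?_) (fun y hy => ?_) (fun h => (h.elim id id).elim)
    · obtain ⟨i, rfl⟩ := hx
      exact .ofLeft ⟨i, rfl⟩ (ihL i)
    · obtain ⟨j, rfl⟩ := hy
      exact .ofRight ⟨j, rfl⟩ (ihR j)

/-- Bypassing a reversible left option: if `G = ⟨{H} ∪ L | R⟩` and `H` has a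
composite right option `K = ⟨K^L | K^R⟩` with `K ≤ G`, then `G` is equivalent
to `G' = ⟨K^L ∪ L | R⟩`. -/
theorem Game.bypass_reversible {A : Type} [PartialOrder A]
    (ι κ ιK κK : Type) (L : ι → Game A) (R : κ → Game A) (hκ : Nonempty κ)
    (KL : ιK → Game A) (KR : κK → Game A) (hιK : Nonempty ιK) (hκK : Nonempty κK)
    (H : Game A)
    (hK : H.IsRightOption (Game.comp ιK κK KL KR hιK hκK))
    (hrev : Game.Le (Game.comp ιK κK KL KR hιK hκK)
      (Game.comp (Unit ⊕ ι) κ (Sum.elim (fun _ => H) L) R ⟨Sum.inl ()⟩ hκ)) :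
    Game.Equiv
      (Game.comp (Unit ⊕ ι) κ (Sum.elim (fun _ => H) L) R ⟨Sum.inl ()⟩ hκ)
      (Game.comp (ιK ⊕ ι) κ (Sum.elim KL L) R (hιK.map Sum.inl) hκ) := by
  obtain ⟨h1, h2, -⟩ := hrev
  set K : Game A := Game.comp ιK κK KL KR hιK hκK with hKdef
  set G : Game A := Game.comp (Unit ⊕ ι) κ (Sum.elim (fun _ => H) L) R ⟨Sum.inl ()⟩ hκ
    with hGdef
  set G' : Game A := Game.comp (ιK ⊕ ι) κ (Sum.elim KL L) R (hιK.map Sum.inl) hκ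
    with hG'def
  have hKG' : Game.Le K G' := by
    refine .mk (fun x hx => ?_) (fun y hy => h2 y hy) (fun h => (h.elim id id).elim)
    obtain ⟨i, rfl⟩ := hx
    exact .ofLeft ⟨Sum.inl i, rfl⟩ (Game.le_refl' _)
  constructor
  · -- G ≤ G'
    refine .mk (fun x hx => ?_) (fun y hy => ?_) (fun h => (h.elim id id).elim)
    · obtain ⟨i, rfl⟩ := hx
      cases i with
      | inl u => exact .ofRight hK hKG'
      | inr i => exact .ofLeft ⟨Sum.inr i, rfl⟩ (Game.le_refl' _)
    · obtain ⟨j, rfl⟩ := hy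
      exact .ofRight ⟨j, rfl⟩ (Game.le_refl' _)
  · -- G' ≤ G
    refine .mk (fun x hx => ?_) (fun y hy => ?_) (fun h => (h.elim id id).elim)
    · obtain ⟨i, rfl⟩ := hx
      cases i with
      | inl i => exact h1 (KL i) ⟨i, rfl⟩
      | inr i => exact .ofLeft ⟨Sum.inr i, rfl⟩ (Game.le_refl' _)
    · obtain ⟨j, rfl⟩ := hy
      exact .ofRight ⟨j, rfl⟩ (Game.le_refl' _)
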